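/- Let L be a Lie algebra over a field K of characteristic 0, n ≥ 3, and r_1,…,r_n ∈ K pairwise distinct. Suppose C_1,…,C_n ∈ L satisfy [C_i,[C_j,C_k]] = 0 for all pairwise distinct i,j,k, and [C_i,[C_i,C_k]] − [C_j,[C_j,C_k]] = (r_j − r_i)·C_k whenever i ≠ k and j ≠ k. Then [C_p, [C_l, [C_l, C_p]]] = 0 for all p ≠ l. -/

import Mathlib

/-!
Write `f p l = ⁅C p, ⁅C l, ⁅C l, C p⁆⁆⁆`. The Jacobi identity makes `f` antisymmetric. Bracketing
the second family of relations with `C p` shows that `f p l` does not depend on `l ≠ p`, since the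
scalar term `(r j - r i) • C p` is killed by `⁅C p, C p⁆ = 0`. Going around a triangle `p, l, m`
of distinct indices then gives `f p l = -f p l`, so `f p l = 0` in characteristic zero.
-/

theorem lie_lie_lie_self_eq_neg {L : Type*} [LieRing L] (x y : L) :
    ⁅x, ⁅y, ⁅y, x⁆⁆⁆ = -⁅y, ⁅x, ⁅x, y⁆⁆⁆ := by
  rw [leibniz_lie x y ⁅y, x⁆, ← lie_skew x y]
  simp only [neg_lie, lie_neg, lie_self, neg_zero, zero_add, neg_neg]

theorem lie_lie_lie_eq_of_lie_lie_sub_eq_smul {K L : Type*} [CommRing K] [LieRing L]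
    [LieAlgebra K L] {x y z : L} {c : K} (h : ⁅y, ⁅y, x⁆⁆ - ⁅z, ⁅z, x⁆⁆ = c • x) :
    ⁅x, ⁅y, ⁅y, x⁆⁆⁆ = ⁅x, ⁅z, ⁅z, x⁆⁆⁆ := by
  rw [← sub_eq_zero, ← lie_sub, h, lie_smul, lie_self, smul_zero]

theorem eq_zero_of_antisymm_of_forall_ne_eq {ι M : Type*} [AddGroup M] [IsAddTorsionFree M]
    (f : ι → ι → M) (antisymm : ∀ a b, f a b = -f b a)
    (indep : ∀ a b c, b ≠ a → c ≠ a → f a b = f a c)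
    {p l m : ι} (hpl : p ≠ l) (hmp : m ≠ p) (hml : m ≠ l) : f p l = 0 :=
  self_eq_neg.mp <| calc
    f p l = f p m := indep p l m hpl.symm hmp
    _ = -f m p := antisymm p m
    _ = -f m l := by rw [indep m p l hmp.symm hml.symm]
    _ = f l m := by rw [antisymm m l, neg_neg]
    _ = f l p := indep l m p hml hpl
    _ = -f p l := antisymm l p

theorem stmt2_general {K L : Type*} [Field K] [CharZero K] [LieRing L] [LieAlgebra K L]
    (n : ℕ) (hn : 3 ≤ n) (r : Fin n → K)
    (C : Fin n → L)
    (h2 : ∀ i j k : Fin n, i ≠ k → j ≠ k →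
      ⁅C i, ⁅C i, C k⁆⁆ - ⁅C j, ⁅C j, C k⁆⁆ = (r j - r i) • C k) :
    ∀ p l : Fin n, p ≠ l → ⁅C p, ⁅C l, ⁅C l, C p⁆⁆⁆ = 0 := by
  intro p l hpl
  have : IsAddTorsionFree L := .of_isTorsionFree K L
  obtain ⟨m, hmp, hml⟩ := Fin.exists_ne_and_ne_of_two_lt p l hn
  exact eq_zero_of_antisymm_of_forall_ne_eq (fun a b => ⁅C a, ⁅C b, ⁅C b, C a⁆⁆⁆)
    (fun a b => lie_lie_lie_self_eq_neg (C a) (C b))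
    (fun a b c hba hca => lie_lie_lie_eq_of_lie_lie_sub_eq_smul (h2 b c a hba hca)) hpl hmp hml

/-- under the relations of `g(n)`, one has `⁅C p, ⁅C l, ⁅C l, C p⁆⁆⁆ = 0`
for all `p ≠ l`. -/
theorem stmt2 {K L : Type*} [Field K] [CharZero K] [LieRing L] [LieAlgebra K L]
    (n : ℕ) (hn : 3 ≤ n) (r : Fin n → K) (hr : Function.Injective r)
    (C : Fin n → L)
    (h1 : ∀ i j k : Fin n, i ≠ j → j ≠ k → i ≠ k → ⁅C i, ⁅C j, C k⁆⁆ = 0)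
    (h2 : ∀ i j k : Fin n, i ≠ k → j ≠ k →
      ⁅C i, ⁅C i, C k⁆⁆ - ⁅C j, ⁅C j, C k⁆⁆ = (r j - r i) • C k) :
    ∀ p l : Fin n, p ≠ l → ⁅C p, ⁅C l, ⁅C l, C p⁆⁆⁆ = 0 :=
  stmt2_general n hn r C h2
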